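/- Let G be a connected finite undirected multigraph with s, t ∈ V(G), s ≠ t, let W_0, …, W_{q+1} be the bundles of G, let Z ⊆ E(G) be a special (s,t)-cut, and let W_{a,b} be the strongly affected stretch. Then: (1) for every i < a, if W_i is unaffected by Z then W_i ⊆ R_s(Z); (2) for every i > b, if W_i is unaffected by Z then W_i ⊆ R_t(Z); (3) if W_{i,j} is a maximal stretch of affected bundles with j < a, then the left interface of W_{i,j} and the right interface of W_{i,j} are both contained in R_s(Z), and j − i + 1 ≤ 2·|{e ∈ Z : both endpoints of e lie in W_{i,j}}|; (4) if W_{i,j} is a maximal stretch of affected bundles with i > b, then both interfaces of W_{i,j} are contained in R_t(Z), and j − i + 1 ≤ 2·|{e ∈ Z : both endpoints of e lie in W_{i,j}}|. -/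

import Mathlib

/-!
A finite undirected multigraph (parallel edges allowed, no loops) is modelled by a
vertex type `V`, an edge type `E` (both finite) and an endpoint map `ends : E → Sym2 V`
such that no edge is a loop (`¬ (ends e).IsDiag`).
-/

namespace FlowAug

variable {V E : Type}

/-- Two vertices are adjacent in `G - X` if some edge outside `X` joins them. -/
def Adj (ends : E → Sym2 V) (X : Set E) (u v : V) : Prop :=
  ∃ e, e ∉ X ∧ ends e = s(u, v)

/-- Reachability in `G - X`. -/
def Reach (ends : E → Sym2 V) (X : Set E) : V → V → Prop :=
  Relation.ReflTransGen (Adj ends X)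

/-- `R_S(X)` : the set of vertices reachable from the vertex set `S` in `G - X`. -/
def RS (ends : E → Sym2 V) (X : Set E) (S : Set V) : Set V :=
  {v | ∃ u ∈ S, Reach ends X u v}

/-- `δ(S)` : the set of edges with exactly one endpoint in `S`. -/
def edgeBoundary (ends : E → Sym2 V) (S : Set V) : Set E :=
  {e | ∃ u v, ends e = s(u, v) ∧ u ∈ S ∧ v ∉ S}

/-- `X` is an `(S,T)`-cut. -/
def IsCut (ends : E → Sym2 V) (X : Set E) (S T : Set V) : Prop :=
  RS ends X S ∩ RS ends X T = ∅

/-- `X` is a minimal `(S,T)`-cut: no proper subset of `X` is an `(S,T)`-cut. -/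
def IsMinimalCut (ends : E → Sym2 V) (X : Set E) (S T : Set V) : Prop :=
  IsCut ends X S T ∧ ∀ Y : Set E, Y ⊂ X → ¬ IsCut ends Y S T

/-- `X` is an `(S,T)`-cut of minimum cardinality. -/
def IsMinimumCut (ends : E → Sym2 V) (X : Set E) (S T : Set V) : Prop :=
  IsCut ends X S T ∧ ∀ Y : Set E, IsCut ends Y S T → X.ncard ≤ Y.ncard

/-- `X` is an `(S,T)`-cut that is closest to `S`: every `(S,T)`-cut `X' ≠ X` with
`R_S(X') ⊆ R_S(X)` satisfies `|X'| > |X|`. -/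
def IsClosestCut (ends : E → Sym2 V) (X : Set E) (S T : Set V) : Prop :=
  IsCut ends X S T ∧
    ∀ X' : Set E, IsCut ends X' S T → X' ≠ X →
      RS ends X' S ⊆ RS ends X S → X.ncard < X'.ncard

/-- `λ_G(s,t)` : the minimum cardinality of an `(s,t)`-cut (equivalently, by Menger's
theorem, the maximum number of pairwise edge-disjoint `(s,t)`-paths). -/
noncomputable def lamCut (ends : E → Sym2 V) (s t : V) : ℕ :=
  sInf {n | ∃ X : Set E, IsCut ends X {s} {t} ∧ X.ncard = n}

/-- `Z_{s,t}` : the edges of `Z` with one endpoint in `R_s(Z)` and one in `R_t(Z)`. -/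
def Zst (ends : E → Sym2 V) (s t : V) (Z : Set E) : Set E :=
  {e | e ∈ Z ∧ ∃ u v, ends e = s(u, v) ∧ u ∈ RS ends Z {s} ∧ v ∈ RS ends Z {t}}

/-- `Z` is a special `(s,t)`-cut: `Z` is an `(s,t)`-cut and `Z_{s,t}` is an `(s,t)`-cut. -/
def IsSpecial (ends : E → Sym2 V) (s t : V) (Z : Set E) : Prop :=
  IsCut ends Z {s} {t} ∧ IsCut ends (Zst ends s t Z) {s} {t}

/-- `Z` is eligible for `(s,t)`: special, and every edge of `Z` has its endpoints in
different connected components of `G - Z`. -/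
def IsEligible (ends : E → Sym2 V) (s t : V) (Z : Set E) : Prop :=
  IsSpecial ends s t Z ∧ ∀ e ∈ Z, ∀ u v : V, ends e = s(u, v) → ¬ Reach ends Z u v

/-- `Z` is a star `(s,t)`-cut: an `(s,t)`-cut each of whose edges has exactly one
endpoint in `R_s(Z)`. -/
def IsStarCut (ends : E → Sym2 V) (s t : V) (Z : Set E) : Prop :=
  IsCut ends Z {s} {t} ∧
    ∀ e ∈ Z, ∃ u v : V, ends e = s(u, v) ∧ u ∈ RS ends Z {s} ∧ v ∉ RS ends Z {s}

/-- A path from `s` to `t` in the multigraph described by `ends`, given by its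
sequence of vertices and traversed edges. -/
structure MGPath (V E : Type) (ends : E → Sym2 V) (s t : V) where
  n : ℕ
  vert : Fin (n + 1) → V
  edge : Fin n → E
  vert_zero : vert 0 = s
  vert_last : vert (Fin.last n) = t
  ends_eq : ∀ i : Fin n, ends (edge i) = s(vert i.castSucc, vert i.succ)

/-- A family of paths is (pairwise) edge-disjoint: no edge is used twice, neither on
a single path nor on two different paths. -/
def EdgeDisjoint {ends : E → Sym2 V} {s t : V} {k : ℕ}
    (P : Fin k → MGPath V E ends s t) : Prop :=
  Function.Injective fun p : (Σ i : Fin k, Fin (P i).n) => (P p.1).edge p.2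

/-- `P` is a witnessing `(s,t)`-flow for `Z`: a family of `λ_G(s,t)` pairwise
edge-disjoint `(s,t)`-paths such that every edge of `Z_{s,t}` occurs on a path of `P`
and every path of `P` contains exactly one edge of `Z`. -/
def IsWitnessingFlow (ends : E → Sym2 V) (s t : V) (Z : Set E) {k : ℕ}
    (P : Fin k → MGPath V E ends s t) : Prop :=
  k = lamCut ends s t ∧ EdgeDisjoint P ∧
    (∀ e ∈ Zst ends s t Z, ∃ (i : Fin k) (j : Fin (P i).n), (P i).edge j = e) ∧
    ∀ i : Fin k, ∃! j : Fin (P i).n, (P i).edge j ∈ Z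

/-- The vertices occurring on the paths of a family `P`. -/
def pathVerts {ends : E → Sym2 V} {s t : V} {k : ℕ}
    (P : Fin k → MGPath V E ends s t) : Set V :=
  {v | ∃ (i : Fin k) (m : Fin ((P i).n + 1)), (P i).vert m = v}

/-- The edges occurring on the paths of a family `P`. -/
def pathEdges {ends : E → Sym2 V} {s t : V} {k : ℕ}
    (P : Fin k → MGPath V E ends s t) : Set E :=
  {e | ∃ (i : Fin k) (j : Fin (P i).n), (P i).edge j = e}

/-- The arcs obtained by orienting every edge of every path of `P` in the forward
direction (from `s` towards `t`). -/
def DirAdjOnFlow {ends : E → Sym2 V} {s t : V} {k : ℕ}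
    (P : Fin k → MGPath V E ends s t) (u v : V) : Prop :=
  ∃ (i : Fin k) (l : Fin (P i).n), (P i).vert l.castSucc = u ∧ (P i).vert l.succ = v

/-- `N[S]` : the closed neighborhood of `S`. -/
def closedNbhd (ends : E → Sym2 V) (S : Set V) : Set V :=
  S ∪ {v | ∃ u ∈ S, ∃ e : E, ends e = s(u, v)}

/-- `X` is the minimum `(s,t)`-cut closest to `s` among all minimum `(s,t)`-cuts
satisfying the property `P`. -/
def IsClosestMinCutAmong (ends : E → Sym2 V) (s t : V) (P : Set E → Prop)
    (X : Set E) : Prop :=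
  IsMinimumCut ends X {s} {t} ∧ P X ∧
    ∀ Y : Set E, IsMinimumCut ends Y {s} {t} → P Y → Y ≠ X →
      RS ends Y {s} ⊆ RS ends X {s} → X.ncard < Y.ncard

/-- `C 0, …, C p` is the canonical sequence of non-crossing minimum `(s,t)`-cuts:
`C 0` is the unique minimum `(s,t)`-cut closest to `s`; `C i` is the unique minimum
`(s,t)`-cut closest to `s` among all minimum `(s,t)`-cuts `X` with
`N[R_s(C (i-1))] ⊆ R_s(X)`; and `p` is the largest index for which such a cut exists. -/
def CanonSeq (ends : E → Sym2 V) (s t : V) (p : ℕ) (C : ℕ → Set E) : Prop :=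
  IsClosestMinCutAmong ends s t (fun _ => True) (C 0) ∧
    (∀ i : ℕ, 0 < i → i ≤ p →
      IsClosestMinCutAmong ends s t
        (fun X => closedNbhd ends (RS ends (C (i - 1)) {s}) ⊆ RS ends X {s}) (C i)) ∧
    ¬ ∃ X : Set E, IsMinimumCut ends X {s} {t} ∧
        closedNbhd ends (RS ends (C p) {s}) ⊆ RS ends X {s}

/-- The blocks `V_0, …, V_{p+1}` associated with the canonical sequence of cuts. -/
def blockOf (ends : E → Sym2 V) (s : V) (p : ℕ) (C : ℕ → Set E) (i : ℕ) : Set V :=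
  if i = 0 then RS ends (C 0) {s}
  else if i ≤ p then RS ends (C i) {s} \ RS ends (C (i - 1)) {s}
  else Set.univ \ RS ends (C p) {s}

/-- Adjacency inside the induced subgraph `G[B]`. -/
def AdjIn (ends : E → Sym2 V) (B : Set V) (u v : V) : Prop :=
  u ∈ B ∧ v ∈ B ∧ ∃ e : E, ends e = s(u, v)

/-- Reachability inside the induced subgraph `G[B]`. -/
def ReachIn (ends : E → Sym2 V) (B : Set V) : V → V → Prop :=
  Relation.ReflTransGen (AdjIn ends B)

/-- The induced subgraph `G[B]` is connected. -/
def ConnIn (ends : E → Sym2 V) (B : Set V) : Prop :=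
  ∀ u ∈ B, ∀ v ∈ B, ReachIn ends B u v

/-- The connected component of `u` in the induced subgraph `G[B]`. -/
def compIn (ends : E → Sym2 V) (B : Set V) (u : V) : Set V :=
  {v | v ∈ B ∧ ReachIn ends B u v}

/-- The set of connected components of the induced subgraph `G[B]`. -/
def componentsIn (ends : E → Sym2 V) (B : Set V) : Set (Set V) :=
  {K | ∃ u ∈ B, K = compIn ends B u}

/-- The union of the blocks `V_a, …, V_b`. -/
def unionBlocks (ends : E → Sym2 V) (s : V) (p : ℕ) (C : ℕ → Set E)
    (a b : ℕ) : Set V :=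
  ⋃ j ∈ Set.Icc a b, blockOf ends s p C j

/-- `st` encodes the decomposition of the blocks `V_0, …, V_{p+1}` into bundles
`W_0, …, W_{q+1}`: bundle `W_i` consists of the blocks `V_{st i}, …, V_{st (i+1) - 1}`.
`W_0 = V_0`, and each further bundle is greedily either a single connected block, or a
maximal union of contiguous blocks inducing a disconnected subgraph. -/
def IsBundleSeq (ends : E → Sym2 V) (s : V) (p : ℕ) (C : ℕ → Set E)
    (q : ℕ) (st : ℕ → ℕ) : Prop :=
  st 0 = 0 ∧ st 1 = 1 ∧ st (q + 2) = p + 2 ∧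
    (∀ i j : ℕ, i < j → j ≤ q + 2 → st i < st j) ∧
    ∀ i : ℕ, 1 ≤ i → i ≤ q + 1 →
      (st (i + 1) = st i + 1 ∧ ConnIn ends (blockOf ends s p C (st i))) ∨
      (¬ ConnIn ends (blockOf ends s p C (st i)) ∧
        ¬ ConnIn ends (unionBlocks ends s p C (st i) (st (i + 1) - 1)) ∧
        ∀ j : ℕ, st (i + 1) - 1 < j → j ≤ p + 1 →
          ConnIn ends (unionBlocks ends s p C (st i) j))

/-- The bundle `W_i`. -/
def bundleOf (ends : E → Sym2 V) (s : V) (p : ℕ) (C : ℕ → Set E) (st : ℕ → ℕ)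
    (i : ℕ) : Set V :=
  unionBlocks ends s p C (st i) (st (i + 1) - 1)

/-- `C'_i` : the cut (among `C_0, …, C_p`) separating bundle `W_i` from `W_{i+1}`. -/
def interCut (C : ℕ → Set E) (st : ℕ → ℕ) (i : ℕ) : Set E :=
  C (st (i + 1) - 1)

/-- A bundle `W` is unaffected by `Z` if `N[W]` is contained in a single connected
component of `G - Z`. -/
def Unaffected (ends : E → Sym2 V) (Z : Set E) (W : Set V) : Prop :=
  ∀ u ∈ closedNbhd ends W, ∀ v ∈ closedNbhd ends W, Reach ends Z u v

/-- The stretch `W_{a,b} = W_a ∪ ⋯ ∪ W_b` of bundles. -/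
def stretchSet (ends : E → Sym2 V) (s : V) (p : ℕ) (C : ℕ → Set E) (st : ℕ → ℕ)
    (a b : ℕ) : Set V :=
  ⋃ i ∈ Set.Icc a b, bundleOf ends s p C st i

/-- The left interface of a stretch starting at bundle `W_a`. -/
def leftInterface (ends : E → Sym2 V) (s : V) (p : ℕ) (C : ℕ → Set E) (st : ℕ → ℕ)
    (a : ℕ) : Set V :=
  if a = 0 then {s}
  else {v | v ∈ bundleOf ends s p C st a ∧ ∃ e ∈ interCut C st (a - 1), v ∈ ends e}

/-- The right interface of a stretch ending at bundle `W_b`. -/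
def rightInterface (ends : E → Sym2 V) (s t : V) (p : ℕ) (C : ℕ → Set E)
    (st : ℕ → ℕ) (q b : ℕ) : Set V :=
  if b = q + 1 then {t}
  else {v | v ∈ bundleOf ends s p C st b ∧ ∃ e ∈ interCut C st b, v ∈ ends e}

/-- `W_{a,b}` is a maximal stretch of bundles all affected by `Z`. -/
def MaxAffStretch (ends : E → Sym2 V) (s : V) (p : ℕ) (C : ℕ → Set E)
    (st : ℕ → ℕ) (q : ℕ) (Z : Set E) (a b : ℕ) : Prop :=
  a ≤ b ∧ b ≤ q + 1 ∧
    (∀ i : ℕ, a ≤ i → i ≤ b → ¬ Unaffected ends Z (bundleOf ends s p C st i)) ∧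
    (a = 0 ∨ Unaffected ends Z (bundleOf ends s p C st (a - 1))) ∧
    (b = q + 1 ∨ Unaffected ends Z (bundleOf ends s p C st (b + 1)))

/-- `W_{a,b}` is a maximal stretch of bundles affected by `Z` containing both a vertex
reachable from `s` and a vertex reachable from `t` in `G - Z`. -/
def StronglyAffStretch (ends : E → Sym2 V) (s t : V) (p : ℕ) (C : ℕ → Set E)
    (st : ℕ → ℕ) (q : ℕ) (Z : Set E) (a b : ℕ) : Prop :=
  MaxAffStretch ends s p C st q Z a b ∧
    (stretchSet ends s p C st a b ∩ RS ends Z {s}).Nonempty ∧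
    (stretchSet ends s p C st a b ∩ RS ends Z {t}).Nonempty

/-- Adjacency inside the induced subgraph `G[B]` avoiding the edge set `X`. -/
def AdjInX (ends : E → Sym2 V) (B : Set V) (X : Set E) (u v : V) : Prop :=
  u ∈ B ∧ v ∈ B ∧ ∃ e, e ∉ X ∧ ends e = s(u, v)

/-- Reachability inside `G[B] - X`. -/
def ReachInX (ends : E → Sym2 V) (B : Set V) (X : Set E) : V → V → Prop :=
  Relation.ReflTransGen (AdjInX ends B X)

/-- `X` is a star `(a,b)`-cut of the induced subgraph `H = G[B]`: in `H - X` no path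
connects `a` and `b`, and every edge of `X` has exactly one endpoint reachable from
`a` in `H - X`. -/
def IsStarCutIn (ends : E → Sym2 V) (B : Set V) (a b : V) (X : Set E) : Prop :=
  ¬ ReachInX ends B X a b ∧
    ∀ e ∈ X, ∃ u v : V, ends e = s(u, v) ∧
      ReachInX ends B X a u ∧ ¬ ReachInX ends B X a v

end FlowAug

/-!
Number the blocks and bundles by `blockIdx` and `bundleIdx`. Because
`N[R_s(C_i)] ⊆ R_s(C_{i+1})`, the bundle index changes by at most one along an edge, and the
union of two consecutive bundles induces a connected subgraph. A walk in `G - Z` from `s`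
(or `t`) to the strongly affected stretch therefore meets every bundle in between, which puts
each unaffected such bundle, with its closed neighbourhood, into `R_s(Z)` (or `R_t(Z)`); the
interfaces of a weakly affected stretch lie in the closed neighbourhoods of its flanking
unaffected bundles. For the bound, an affected bundle `W_l` of the stretch cannot have all
edges of `Z` near it bypassed in `G - Z`, since `W_l ∪ W_{l±1}` is connected.
-/

namespace FlowAug

variable {V E : Type} {ends : E → Sym2 V}

section Reachability

variable {X Z : Set E} {S B U W : Set V} {u v w x y : V} {e : E}

lemma Adj.symm (h : Adj ends X u v) : Adj ends X v u := by
  obtain ⟨e, he, hends⟩ := h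
  exact ⟨e, he, hends.trans Sym2.eq_swap⟩

lemma Reach.symm (h : Reach ends X u v) : Reach ends X v u := by
  induction h with
  | refl => exact .refl
  | tail _ hadj ih => exact .head hadj.symm ih

lemma mem_RS_singleton : v ∈ RS ends X {u} ↔ Reach ends X u v := by
  simp [RS]

lemma isCut_singleton_iff {s t : V} : IsCut ends X {s} {t} ↔ ¬ Reach ends X s t := by
  simp only [IsCut, Set.eq_empty_iff_forall_notMem, Set.mem_inter_iff, mem_RS_singleton, not_and]
  exact ⟨fun h hst => h t hst .refl, fun h v hs ht => h (hs.trans ht.symm)⟩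

lemma mem_RS_of_adj (he : ends e = s(u, v)) (heX : e ∉ X) (hu : u ∈ RS ends X S) :
    v ∈ RS ends X S := by
  obtain ⟨w, hw, hwu⟩ := hu
  exact ⟨w, hw, hwu.tail ⟨e, heX, he⟩⟩

lemma edgeBoundary_RS_subset : edgeBoundary ends (RS ends X S) ⊆ X := by
  rintro e ⟨u, v, he, hu, hv⟩
  by_contra heX
  exact hv (mem_RS_of_adj he heX hu)

lemma Reach.mem_of_edgeBoundary (h : Reach ends (edgeBoundary ends B) u v) (hu : u ∈ B) :
    v ∈ B := by
  induction h with
  | refl => exact hu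
  | tail _ hadj ih =>
    obtain ⟨e, he, hends⟩ := hadj
    by_contra hv
    exact he ⟨_, _, hends, ih, hv⟩

/-- The boundary of `R_s(X)` is itself an `(s,t)`-cut, and it is contained in `X`. -/
lemma IsMinimumCut.subset_edgeBoundary [Finite E] {s t : V}
    (hX : IsMinimumCut ends X {s} {t}) : X ⊆ edgeBoundary ends (RS ends X {s}) := by
  have hcut : IsCut ends (edgeBoundary ends (RS ends X {s})) {s} {t} :=
    isCut_singleton_iff.mpr fun h => isCut_singleton_iff.mp hX.1
      (mem_RS_singleton.mp (h.mem_of_edgeBoundary (mem_RS_singleton.mpr .refl)))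
  exact (Set.eq_of_subset_of_ncard_le edgeBoundary_RS_subset (hX.2 _ hcut)).ge

lemma ReachIn.symm (h : ReachIn ends B u v) : ReachIn ends B v u := by
  induction h with
  | refl => exact .refl
  | tail _ hadj ih =>
    obtain ⟨hw, hv, e, he⟩ := hadj
    exact .head ⟨hv, hw, e, he.trans Sym2.eq_swap⟩ ih

lemma ReachIn.mono {B' : Set V} (hB : B ⊆ B') (h : ReachIn ends B u v) :
    ReachIn ends B' u v :=
  Relation.ReflTransGen.mono (r := AdjIn ends B) (p := AdjIn ends B')
    (fun _ _ h => ⟨hB h.1, hB h.2.1, h.2.2⟩) u v h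

lemma Reach.reachIn (h : Reach ends X u v) (hB : RS ends X {u} ⊆ B) : ReachIn ends B u v := by
  induction h with
  | refl => exact .refl
  | @tail w v' hw hadj ih =>
    obtain ⟨e, heX, he⟩ := hadj
    exact ih.tail ⟨hB (mem_RS_singleton.mpr hw), hB (mem_RS_singleton.mpr (hw.tail ⟨e, heX, he⟩)),
      e, he⟩

lemma ConnIn.reach (hU : ConnIn ends U)
    (hZ : ∀ e ∈ Z, ∀ x y, ends e = s(x, y) → x ∈ U → y ∈ U → Reach ends Z x y)
    (hu : u ∈ U) (hv : v ∈ U) : Reach ends Z u v := by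
  induction hU u hu v hv with
  | refl => exact .refl
  | @tail w v' _ hadj ih =>
    obtain ⟨hw, hv', e, he⟩ := hadj
    by_cases heZ : e ∈ Z
    · exact (ih hw).trans (hZ e heZ w v' he hw hv')
    · exact (ih hw).tail ⟨e, heZ, he⟩

lemma subset_closedNbhd : W ⊆ closedNbhd ends W := Set.subset_union_left

lemma mem_closedNbhd_of_adj (hw : w ∈ W) (he : ends e = s(w, x)) : x ∈ closedNbhd ends W :=
  Or.inr ⟨w, hw, e, he⟩

lemma Unaffected.reach (hW : Unaffected ends Z W) (hx : x ∈ W) (he : ends e = s(x, y)) :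
    Reach ends Z x y :=
  hW x (subset_closedNbhd hx) y (mem_closedNbhd_of_adj hx he)

lemma Unaffected.closedNbhd_subset_RS (hW : Unaffected ends Z W) (hw : w ∈ W ∩ RS ends Z S) :
    closedNbhd ends W ⊆ RS ends Z S := by
  obtain ⟨s, hs, hsw⟩ := hw.2
  exact fun v hv => ⟨s, hs, hsw.trans (hW w (subset_closedNbhd hw.1) v hv)⟩

lemma unaffected_of_connIn (hWU : W ⊆ U) (hU : ConnIn ends U)
    (hZ : ∀ e ∈ Z, ∀ x y, ends e = s(x, y) → (x ∈ W ∨ x ∈ U ∧ y ∈ U) → Reach ends Z x y) :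
    Unaffected ends Z W := by
  have hUZ : ∀ u ∈ U, ∀ v ∈ U, Reach ends Z u v := fun u hu v hv =>
    hU.reach (fun e he x y hxy hx hy => hZ e he x y hxy (.inr ⟨hx, hy⟩)) hu hv
  have hnear : ∀ x ∈ closedNbhd ends W, ∃ w ∈ U, Reach ends Z w x := by
    rintro x (hx | ⟨w, hw, e, he⟩)
    · exact ⟨x, hWU hx, .refl⟩
    · refine ⟨w, hWU hw, ?_⟩
      by_cases heZ : e ∈ Z
      · exact hZ e heZ w x he (.inl hw)
      · exact .single ⟨e, heZ, he⟩
  intro u hu v hv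
  obtain ⟨u', hu', hu'u⟩ := hnear u hu
  obtain ⟨v', hv', hv'v⟩ := hnear v hv
  exact hu'u.symm.trans ((hUZ u' hu' v' hv').trans hv'v)

end Reachability

section Blocks

variable {s t u v : V} {p m : ℕ} {C : ℕ → Set E} {e : E}

noncomputable def blockIdx (ends : E → Sym2 V) (s : V) (p : ℕ) (C : ℕ → Set E) (v : V) : ℕ :=
  sInf {i | (i ≤ p ∧ v ∈ RS ends (C i) {s}) ∨ i = p + 1}

lemma blockIdx_le (v : V) : blockIdx ends s p C v ≤ p + 1 :=
  Nat.sInf_le (Or.inr rfl)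

lemma blockIdx_le_of_mem (hm : m ≤ p) (hv : v ∈ RS ends (C m) {s}) :
    blockIdx ends s p C v ≤ m :=
  Nat.sInf_le (Or.inl ⟨hm, hv⟩)

lemma blockIdx_self : blockIdx ends s p C s = 0 :=
  Nat.le_zero.mp (blockIdx_le_of_mem (Nat.zero_le p) (mem_RS_singleton.mpr .refl))

lemma CanonSeq.isMinimumCut (hC : CanonSeq ends s t p C) (hm : m ≤ p) :
    IsMinimumCut ends (C m) {s} {t} := by
  rcases Nat.eq_zero_or_pos m with rfl | hm0
  · exact hC.1.1
  · exact (hC.2.1 m hm0 hm).1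

lemma CanonSeq.closedNbhd_subset (hC : CanonSeq ends s t p C) (hm : m < p) :
    closedNbhd ends (RS ends (C m) {s}) ⊆ RS ends (C (m + 1)) {s} :=
  (hC.2.1 (m + 1) m.succ_pos hm).2.1

lemma CanonSeq.RS_mono (hC : CanonSeq ends s t p C) {i j : ℕ} (hij : i ≤ j) (hj : j ≤ p) :
    RS ends (C i) {s} ⊆ RS ends (C j) {s} := by
  induction j, hij using Nat.le_induction with
  | base => exact subset_rfl
  | succ j _ ih => exact (ih (by omega)).trans (subset_closedNbhd.trans (hC.closedNbhd_subset hj))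

lemma CanonSeq.blockIdx_le_iff (hC : CanonSeq ends s t p C) (hm : m ≤ p) :
    blockIdx ends s p C v ≤ m ↔ v ∈ RS ends (C m) {s} := by
  refine ⟨fun h => ?_, blockIdx_le_of_mem hm⟩
  rcases Nat.sInf_mem (⟨p + 1, Or.inr rfl⟩ :
      {i | (i ≤ p ∧ v ∈ RS ends (C i) {s}) ∨ i = p + 1}.Nonempty) with ⟨-, hv⟩ | hp
  · exact hC.RS_mono h hm hv
  · rw [blockIdx] at h
    omega

lemma CanonSeq.blockIdx_le_succ_of_adj (hC : CanonSeq ends s t p C) (he : ends e = s(u, v)) :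
    blockIdx ends s p C v ≤ blockIdx ends s p C u + 1 := by
  by_cases hu : blockIdx ends s p C u < p
  · have hu' := (hC.blockIdx_le_iff hu.le).mp le_rfl
    exact blockIdx_le_of_mem hu (hC.closedNbhd_subset hu (mem_closedNbhd_of_adj hu' he))
  · have : blockIdx ends s p C v ≤ p + 1 := blockIdx_le v
    omega

lemma CanonSeq.blockIdx_target (hC : CanonSeq ends s t p C) : blockIdx ends s p C t = p + 1 := by
  have ht : ¬ blockIdx ends s p C t ≤ p := fun h =>
    isCut_singleton_iff.mp (hC.isMinimumCut le_rfl).1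
      (mem_RS_singleton.mp ((hC.blockIdx_le_iff le_rfl).mp h))
  have : blockIdx ends s p C t ≤ p + 1 := blockIdx_le t
  omega

lemma CanonSeq.blockIdx_of_mem_cut [Finite E] (hC : CanonSeq ends s t p C) (hm : m ≤ p)
    (he : e ∈ C m) :
    ∃ x y, ends e = s(x, y) ∧ blockIdx ends s p C x = m ∧ blockIdx ends s p C y = m + 1 := by
  obtain ⟨x, y, hxy, hx, hy⟩ := (hC.isMinimumCut hm).subset_edgeBoundary he
  have hx' := (hC.blockIdx_le_iff hm).mpr hx
  have hy' := mt (hC.blockIdx_le_iff hm).mp hy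
  have := hC.blockIdx_le_succ_of_adj hxy
  exact ⟨x, y, hxy, by omega, by omega⟩

lemma CanonSeq.mem_blockOf_iff (hC : CanonSeq ends s t p C) (hm : m ≤ p + 1) :
    v ∈ blockOf ends s p C m ↔ blockIdx ends s p C v = m := by
  have : blockIdx ends s p C v ≤ p + 1 := blockIdx_le v
  unfold blockOf
  split_ifs with hm0 hmp
  · rw [← hC.blockIdx_le_iff (Nat.zero_le p)]
    omega
  · rw [Set.mem_sdiff, ← hC.blockIdx_le_iff hmp, ← hC.blockIdx_le_iff (by omega)]
    omega
  · rw [Set.mem_sdiff, ← hC.blockIdx_le_iff le_rfl]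
    simp only [Set.mem_univ, true_and]
    omega

lemma CanonSeq.mem_unionBlocks_iff (hC : CanonSeq ends s t p C) {c d : ℕ} (hd : d ≤ p + 1) :
    v ∈ unionBlocks ends s p C c d ↔
      c ≤ blockIdx ends s p C v ∧ blockIdx ends s p C v ≤ d := by
  simp only [unionBlocks, Set.mem_iUnion, Set.mem_Icc, exists_prop]
  constructor
  · rintro ⟨k, hk, hv⟩
    rw [hC.mem_blockOf_iff (by omega)] at hv
    omega
  · intro h
    exact ⟨_, h, (hC.mem_blockOf_iff (by omega)).mpr rfl⟩

lemma CanonSeq.unionBlocks_self (hC : CanonSeq ends s t p C) (hm : m ≤ p + 1) :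
    unionBlocks ends s p C m m = blockOf ends s p C m := by
  ext v
  rw [hC.mem_unionBlocks_iff hm, hC.mem_blockOf_iff hm]
  omega

lemma CanonSeq.reachIn_of_blockIdx_le (hC : CanonSeq ends s t p C)
    (hconn : ∀ u v : V, Reach ends (∅ : Set E) u v) (hv : blockIdx ends s p C v ≤ m) :
    ReachIn ends {w | blockIdx ends s p C w ≤ m} s v := by
  by_cases hm : m ≤ p
  · exact (mem_RS_singleton.mp ((hC.blockIdx_le_iff hm).mp hv)).reachIn
      fun w hw => (hC.blockIdx_le_iff hm).mpr hw
  · refine (hconn s v).reachIn fun w _ => ?_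
    have : blockIdx ends s p C w ≤ p + 1 := blockIdx_le w
    exact show blockIdx ends s p C w ≤ m by omega

lemma CanonSeq.connIn_blockOf_zero (hC : CanonSeq ends s t p C)
    (hconn : ∀ u v : V, Reach ends (∅ : Set E) u v) : ConnIn ends (blockOf ends s p C 0) := by
  have hs : ∀ v ∈ blockOf ends s p C 0, ReachIn ends (blockOf ends s p C 0) s v := by
    intro v hv
    rw [hC.mem_blockOf_iff (Nat.zero_le _)] at hv
    refine (hC.reachIn_of_blockIdx_le hconn hv.le).mono fun w hw => ?_
    exact (hC.mem_blockOf_iff (Nat.zero_le _)).mpr (Nat.le_zero.mp hw)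
  exact fun u hu v hv => (hs u hu).symm.trans (hs v hv)

lemma CanonSeq.exists_adj_reachIn_blockOf (hC : CanonSeq ends s t p C)
    (hconn : ∀ u v : V, Reach ends (∅ : Set E) u v) (hm : m ≤ p + 1)
    (hv : blockIdx ends s p C v = m) (hm0 : m ≠ 0) :
    ∃ x y e, ends e = s(x, y) ∧ blockIdx ends s p C x + 1 = m ∧ blockIdx ends s p C y = m ∧
      ReachIn ends (blockOf ends s p C m) y v := by
  induction hC.reachIn_of_blockIdx_le hconn hv.le with
  | refl => exact absurd (blockIdx_self.symm.trans hv) (Ne.symm hm0)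
  | @tail w v' _ hadj ih =>
    obtain ⟨hw, -, e, he⟩ := hadj
    have := hC.blockIdx_le_succ_of_adj he
    by_cases hwm : blockIdx ends s p C w = m
    · obtain ⟨x, y, f, hf, hx, hy, hyw⟩ := ih hwm
      exact ⟨x, y, f, hf, hx, hy, hyw.tail ⟨(hC.mem_blockOf_iff hm).mpr hwm,
        (hC.mem_blockOf_iff hm).mpr hv, e, he⟩⟩
    · have hw : blockIdx ends s p C w ≤ m := hw
      exact ⟨w, v', e, he, by omega, hv, .refl⟩

lemma CanonSeq.connIn_unionBlocks_succ (hC : CanonSeq ends s t p C)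
    (hconn : ∀ u v : V, Reach ends (∅ : Set E) u v) {c d : ℕ} (hcd : c ≤ d) (hd : d ≤ p)
    (h : ConnIn ends (unionBlocks ends s p C c d)) :
    ConnIn ends (unionBlocks ends s p C c (d + 1)) := by
  have hmem := fun v => hC.mem_unionBlocks_iff (v := v) (c := c) (show d ≤ p + 1 by omega)
  have hmem' := fun v => hC.mem_unionBlocks_iff (v := v) (c := c) (show d + 1 ≤ p + 1 by omega)
  have hsub : unionBlocks ends s p C c d ⊆ unionBlocks ends s p C c (d + 1) := by
    intro w hw
    rw [hmem] at hw
    rw [hmem']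
    omega
  have hnear : ∀ w ∈ unionBlocks ends s p C c (d + 1), ∃ x ∈ unionBlocks ends s p C c d,
      ReachIn ends (unionBlocks ends s p C c (d + 1)) x w := by
    intro w hw
    rw [hmem'] at hw
    by_cases hwd : blockIdx ends s p C w ≤ d
    · exact ⟨w, (hmem w).mpr ⟨hw.1, hwd⟩, .refl⟩
    · obtain ⟨x, y, f, hf, hx, hy, hyw⟩ :=
        hC.exists_adj_reachIn_blockOf hconn (v := w) (m := d + 1) (by omega) (by omega) (by omega)
      refine ⟨x, (hmem x).mpr (by omega), .head ⟨(hmem' x).mpr (by omega),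
        (hmem' y).mpr (by omega), f, hf⟩ (hyw.mono fun z hz => ?_)⟩
      rw [hC.mem_blockOf_iff (by omega)] at hz
      exact (hmem' z).mpr (by omega)
  intro u hu v hv
  obtain ⟨x, hx, hxu⟩ := hnear u hu
  obtain ⟨y, hy, hyv⟩ := hnear v hv
  exact hxu.symm.trans (((h x hx y hy).mono hsub).trans hyv)

lemma CanonSeq.connIn_unionBlocks_of_le (hC : CanonSeq ends s t p C)
    (hconn : ∀ u v : V, Reach ends (∅ : Set E) u v) {c d d' : ℕ} (hcd : c ≤ d)
    (h : ConnIn ends (unionBlocks ends s p C c d)) (hdd' : d ≤ d') (hd' : d' ≤ p + 1) :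
    ConnIn ends (unionBlocks ends s p C c d') := by
  induction d', hdd' using Nat.le_induction with
  | base => exact h
  | succ d' hdd' ih => exact hC.connIn_unionBlocks_succ hconn (by omega) (by omega) (ih (by omega))

end Blocks

section Bundles

variable {s t u v : V} {p q i j m : ℕ} {C : ℕ → Set E} {st : ℕ → ℕ} {e : E}

noncomputable def bundleIdx (ends : E → Sym2 V) (s : V) (p : ℕ) (C : ℕ → Set E) (st : ℕ → ℕ)
    (v : V) : ℕ :=
  sInf {i | blockIdx ends s p C v < st (i + 1)}

lemma IsBundleSeq.st_lt (hW : IsBundleSeq ends s p C q st) (hij : i < j) (hj : j ≤ q + 2) :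
    st i < st j :=
  hW.2.2.2.1 i j hij hj

lemma IsBundleSeq.st_le_st (hW : IsBundleSeq ends s p C q st) (hij : i ≤ j) (hj : j ≤ q + 2) :
    st i ≤ st j := by
  rcases hij.lt_or_eq with hij | rfl
  · exact (hW.st_lt hij hj).le
  · exact le_rfl

lemma IsBundleSeq.st_top (hW : IsBundleSeq ends s p C q st) : st (q + 1 + 1) = p + 2 :=
  hW.2.2.1

lemma IsBundleSeq.st_le (hW : IsBundleSeq ends s p C q st) (hi : i ≤ q + 2) : st i ≤ p + 2 :=
  hW.2.2.1 ▸ hW.st_le_st hi le_rfl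

lemma IsBundleSeq.st_pos (hW : IsBundleSeq ends s p C q st) (hi0 : i ≠ 0) (hi : i ≤ q + 2) :
    0 < st i :=
  hW.1 ▸ hW.st_lt (Nat.pos_of_ne_zero hi0) hi

lemma IsBundleSeq.bundleIdx_le (hW : IsBundleSeq ends s p C q st) (v : V) :
    bundleIdx ends s p C st v ≤ q + 1 := by
  refine Nat.sInf_le (show blockIdx ends s p C v < st (q + 1 + 1) from ?_)
  have : blockIdx ends s p C v ≤ p + 1 := blockIdx_le v
  rw [hW.st_top]
  omega

lemma IsBundleSeq.bundleIdx_eq_iff (hW : IsBundleSeq ends s p C q st) (hi : i ≤ q + 1) :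
    bundleIdx ends s p C st v = i ↔
      st i ≤ blockIdx ends s p C v ∧ blockIdx ends s p C v < st (i + 1) := by
  set k := bundleIdx ends s p C st v
  have hkq := hW.bundleIdx_le v
  have hlt : blockIdx ends s p C v < st (k + 1) := Nat.sInf_mem ⟨k, Nat.sInf_mem ⟨q + 1, by
    have : blockIdx ends s p C v ≤ p + 1 := blockIdx_le v
    show _ < st (q + 1 + 1)
    rw [hW.st_top]
    omega⟩⟩
  have hge : st k ≤ blockIdx ends s p C v := by
    rcases Nat.eq_zero_or_pos k with h0 | h0
    · rw [h0, hW.1]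
      exact Nat.zero_le _
    · have := Nat.notMem_of_lt_sInf (show k - 1 < k by omega)
      rw [Set.mem_ofPred_eq, Nat.sub_add_cancel h0, not_lt] at this
      exact this
  refine ⟨fun h => h ▸ ⟨hge, hlt⟩, fun ⟨h1, h2⟩ => ?_⟩
  have hki : k ≤ i := Nat.sInf_le h2
  by_contra hne
  have := hW.st_le_st (show k + 1 ≤ i by omega) (by omega)
  omega

lemma IsBundleSeq.bundleIdx_self (hW : IsBundleSeq ends s p C q st) :
    bundleIdx ends s p C st s = 0 :=
  Nat.le_zero.mp (Nat.sInf_le (show blockIdx ends s p C s < st (0 + 1) by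
    rw [blockIdx_self, hW.2.1]
    exact one_pos))

lemma IsBundleSeq.bundleIdx_target (hW : IsBundleSeq ends s p C q st)
    (hC : CanonSeq ends s t p C) : bundleIdx ends s p C st t = q + 1 := by
  rw [hW.bundleIdx_eq_iff le_rfl, hC.blockIdx_target, hW.st_top]
  have := hW.st_lt (show q + 1 < q + 1 + 1 by omega) le_rfl
  have := hW.st_top
  omega

lemma IsBundleSeq.mem_bundleOf_iff (hW : IsBundleSeq ends s p C q st)
    (hC : CanonSeq ends s t p C) (hi : i ≤ q + 1) :
    v ∈ bundleOf ends s p C st i ↔ bundleIdx ends s p C st v = i := by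
  have h1 := hW.st_le (show i + 1 ≤ q + 2 by omega)
  have h2 := hW.st_pos (show i + 1 ≠ 0 by omega) (show i + 1 ≤ q + 2 by omega)
  rw [bundleOf, hC.mem_unionBlocks_iff (by omega), hW.bundleIdx_eq_iff hi]
  omega

lemma IsBundleSeq.mem_stretchSet_iff (hW : IsBundleSeq ends s p C q st)
    (hC : CanonSeq ends s t p C) (hj : j ≤ q + 1) :
    v ∈ stretchSet ends s p C st i j ↔
      i ≤ bundleIdx ends s p C st v ∧ bundleIdx ends s p C st v ≤ j := by
  simp only [stretchSet, Set.mem_iUnion, Set.mem_Icc, exists_prop]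
  constructor
  · rintro ⟨l, hl, hv⟩
    rw [hW.mem_bundleOf_iff hC (by omega)] at hv
    omega
  · intro h
    exact ⟨_, h, (hW.mem_bundleOf_iff hC (by omega)).mpr rfl⟩

lemma IsBundleSeq.bundleIdx_le_succ_of_adj (hW : IsBundleSeq ends s p C q st)
    (hC : CanonSeq ends s t p C) (he : ends e = s(u, v)) :
    bundleIdx ends s p C st v ≤ bundleIdx ends s p C st u + 1 := by
  have hu := hW.bundleIdx_le u
  rcases hu.lt_or_eq with hu | hu
  · have h1 := ((hW.bundleIdx_eq_iff hu.le).mp rfl).2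
    have h2 := hW.st_lt (show bundleIdx ends s p C st u + 1 < bundleIdx ends s p C st u + 1 + 1
      by omega) (by omega)
    have h3 := hC.blockIdx_le_succ_of_adj he
    exact Nat.sInf_le (show blockIdx ends s p C v < st (bundleIdx ends s p C st u + 1 + 1) by
      omega)
  · have := hW.bundleIdx_le v
    omega

lemma IsBundleSeq.exists_bundleIdx_eq_of_reach (hW : IsBundleSeq ends s p C q st)
    (hC : CanonSeq ends s t p C) {X : Set E} (h : Reach ends X u v)
    (hu : bundleIdx ends s p C st u ≤ m) (hv : m ≤ bundleIdx ends s p C st v) :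
    ∃ w, bundleIdx ends s p C st w = m ∧ Reach ends X u w := by
  induction h using Relation.ReflTransGen.head_induction_on with
  | refl => exact ⟨v, by omega, .refl⟩
  | @head u w hadj _ ih =>
    by_cases hw : bundleIdx ends s p C st w ≤ m
    · obtain ⟨x, hx, hwx⟩ := ih hw
      exact ⟨x, hx, .head hadj hwx⟩
    · obtain ⟨f, -, hf⟩ := hadj
      have := hW.bundleIdx_le_succ_of_adj hC hf
      exact ⟨u, by omega, .refl⟩

lemma IsBundleSeq.closedNbhd_subset_RS (hW : IsBundleSeq ends s p C q st)
    (hC : CanonSeq ends s t p C) {Z : Set E} (h : Reach ends Z u v) (hm : m ≤ q + 1)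
    (hbetween : bundleIdx ends s p C st u ≤ m ∧ m ≤ bundleIdx ends s p C st v ∨
      bundleIdx ends s p C st v ≤ m ∧ m ≤ bundleIdx ends s p C st u)
    (hU : Unaffected ends Z (bundleOf ends s p C st m)) :
    closedNbhd ends (bundleOf ends s p C st m) ⊆ RS ends Z {u} := by
  obtain ⟨w, hw, huw⟩ : ∃ w, bundleIdx ends s p C st w = m ∧ Reach ends Z u w := by
    rcases hbetween with ⟨hu, hv⟩ | ⟨hv, hu⟩
    · exact hW.exists_bundleIdx_eq_of_reach hC h hu hv
    · obtain ⟨w, hw, hvw⟩ := hW.exists_bundleIdx_eq_of_reach hC h.symm hv hu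
      exact ⟨w, hw, h.trans hvw⟩
  exact hU.closedNbhd_subset_RS ⟨(hW.mem_bundleOf_iff hC hm).mpr hw, mem_RS_singleton.mpr huw⟩

lemma IsBundleSeq.bundleIdx_of_mem_interCut [Finite E] (hW : IsBundleSeq ends s p C q st)
    (hC : CanonSeq ends s t p C) (hi : i ≤ q) (he : e ∈ interCut C st i) :
    ∃ x y, ends e = s(x, y) ∧ bundleIdx ends s p C st x = i ∧
      bundleIdx ends s p C st y = i + 1 := by
  have h1 := hW.st_lt (show i < i + 1 by omega) (by omega)
  have h2 := hW.st_lt (show i + 1 < i + 1 + 1 by omega) (by omega)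
  have h3 := hW.st_le (show i + 1 + 1 ≤ q + 2 by omega)
  obtain ⟨x, y, hxy, hx, hy⟩ := hC.blockIdx_of_mem_cut (show st (i + 1) - 1 ≤ p by omega) he
  refine ⟨x, y, hxy, (hW.bundleIdx_eq_iff (by omega)).mpr ?_,
    (hW.bundleIdx_eq_iff (by omega)).mpr ?_⟩ <;> omega

lemma IsBundleSeq.connIn_bundleOf_union_succ (hW : IsBundleSeq ends s p C q st)
    (hC : CanonSeq ends s t p C) (hconn : ∀ u v : V, Reach ends (∅ : Set E) u v) (hm : m ≤ q) :
    ConnIn ends (bundleOf ends s p C st m ∪ bundleOf ends s p C st (m + 1)) := by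
  have h1 := hW.st_lt (show m < m + 1 by omega) (by omega)
  have h2 := hW.st_lt (show m + 1 < m + 1 + 1 by omega) (by omega)
  have h3 := hW.st_le (show m + 1 + 1 ≤ q + 2 by omega)
  have hunion : bundleOf ends s p C st m ∪ bundleOf ends s p C st (m + 1) =
      unionBlocks ends s p C (st m) (st (m + 1 + 1) - 1) := by
    ext v
    rw [Set.mem_union, bundleOf, bundleOf, hC.mem_unionBlocks_iff (by omega),
      hC.mem_unionBlocks_iff (by omega), hC.mem_unionBlocks_iff (by omega)]
    omega
  rw [hunion]
  have hblock : ConnIn ends (blockOf ends s p C (st m)) →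
      ConnIn ends (unionBlocks ends s p C (st m) (st (m + 1 + 1) - 1)) := fun h =>
    hC.connIn_unionBlocks_of_le hconn le_rfl ((hC.unionBlocks_self (m := st m) (by omega)).symm ▸ h)
      (by omega) (by omega)
  rcases Nat.eq_zero_or_pos m with rfl | hm0
  · have h0 := hC.connIn_blockOf_zero hconn
    rw [← hW.1] at h0
    exact hblock h0
  · rcases hW.2.2.2.2 m hm0 (by omega) with ⟨-, hconnected⟩ | ⟨-, -, hmaximal⟩
    · exact hblock hconnected
    · exact hmaximal (st (m + 1 + 1) - 1) (by omega) (by omega)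

lemma IsBundleSeq.leftInterface_subset [Finite E] (hW : IsBundleSeq ends s p C q st)
    (hC : CanonSeq ends s t p C) (hi : i ≤ q + 1) {R : Set V} (hs : i = 0 → s ∈ R)
    (hR : i ≠ 0 → closedNbhd ends (bundleOf ends s p C st (i - 1)) ⊆ R) :
    leftInterface ends s p C st i ⊆ R := by
  unfold leftInterface
  split_ifs with hi0
  · exact Set.singleton_subset_iff.mpr (hs hi0)
  · rintro v ⟨hv, e, he, hve⟩
    obtain ⟨x, y, hxy, hx, hy⟩ := hW.bundleIdx_of_mem_interCut hC (by omega) he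
    rw [hW.mem_bundleOf_iff hC hi] at hv
    rw [hxy, Sym2.mem_iff] at hve
    obtain rfl : v = y := hve.resolve_left (by rintro rfl; omega)
    exact hR hi0 (mem_closedNbhd_of_adj ((hW.mem_bundleOf_iff hC (by omega)).mpr hx) hxy)

lemma IsBundleSeq.rightInterface_subset [Finite E] (hW : IsBundleSeq ends s p C q st)
    (hC : CanonSeq ends s t p C) (hj : j ≤ q + 1) {R : Set V} (ht : j = q + 1 → t ∈ R)
    (hR : j ≠ q + 1 → closedNbhd ends (bundleOf ends s p C st (j + 1)) ⊆ R) :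
    rightInterface ends s t p C st q j ⊆ R := by
  unfold rightInterface
  split_ifs with hjq
  · exact Set.singleton_subset_iff.mpr (ht hjq)
  · rintro v ⟨hv, e, he, hve⟩
    obtain ⟨x, y, hxy, hx, hy⟩ := hW.bundleIdx_of_mem_interCut hC (by omega) he
    rw [hW.mem_bundleOf_iff hC hj] at hv
    rw [hxy, Sym2.mem_iff] at hve
    obtain rfl : v = x := hve.resolve_right (by rintro rfl; omega)
    exact hR hjq (mem_closedNbhd_of_adj ((hW.mem_bundleOf_iff hC (by omega)).mpr hy)
      (hxy.trans Sym2.eq_swap))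

end Bundles

lemma sub_le_two_mul_ncard {α : Type*} [Finite α] {F : Set α} (lo : α → ℕ) {i j : ℕ}
    (hcover : ∀ l, i ≤ l → l ≤ j → ∃ f ∈ F, lo f ≤ l ∧ l ≤ lo f + 1) :
    j + 1 - i ≤ 2 * F.ncard := by
  classical
  have hF := F.toFinite
  calc j + 1 - i = (Finset.Icc i j).card := (Nat.card_Icc i j).symm
    _ ≤ (hF.toFinset.biUnion fun f => Finset.Icc (lo f) (lo f + 1)).card := by
      refine Finset.card_le_card fun l hl => ?_
      obtain ⟨f, hf, hlf⟩ := hcover l (Finset.mem_Icc.mp hl).1 (Finset.mem_Icc.mp hl).2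
      exact Finset.mem_biUnion.mpr ⟨f, hF.mem_toFinset.mpr hf, Finset.mem_Icc.mpr hlf⟩
    _ ≤ hF.toFinset.card * 2 :=
      Finset.card_biUnion_le_card_mul _ _ _ fun f _ => by rw [Nat.card_Icc]; omega
    _ = 2 * F.ncard := by rw [Set.ncard_eq_toFinset_card F hF, mul_comm]

section Stretches

variable {s t x y : V} {p q i j l m : ℕ} {C : ℕ → Set E} {st : ℕ → ℕ} {Z : Set E} {e : E}

def innerEdges (ends : E → Sym2 V) (Z : Set E) (W : Set V) : Set E :=
  {e | e ∈ Z ∧ ∀ v ∈ ends e, v ∈ W}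

lemma MaxAffStretch.unaffected_pred (hmax : MaxAffStretch ends s p C st q Z i j) (hi : i ≠ 0) :
    Unaffected ends Z (bundleOf ends s p C st (i - 1)) :=
  hmax.2.2.2.1.resolve_left hi

lemma MaxAffStretch.unaffected_succ (hmax : MaxAffStretch ends s p C st q Z i j)
    (hj : j ≠ q + 1) : Unaffected ends Z (bundleOf ends s p C st (j + 1)) :=
  hmax.2.2.2.2.resolve_left hj

/-- The bundles flanking a maximal affected stretch are unaffected, so an edge whose endpoints
are separated by `Z` cannot touch them. -/
lemma MaxAffStretch.bundleIdx_mem_of_not_reach (hmax : MaxAffStretch ends s p C st q Z i j)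
    (hW : IsBundleSeq ends s p C q st) (hC : CanonSeq ends s t p C) (he : ends e = s(x, y))
    (hr : ¬ Reach ends Z x y) (hi : i ≤ bundleIdx ends s p C st x + 1)
    (hj : bundleIdx ends s p C st x ≤ j + 1) :
    i ≤ bundleIdx ends s p C st x ∧ bundleIdx ends s p C st x ≤ j := by
  have hxq := hW.bundleIdx_le x
  constructor <;> by_contra hx
  · exact hr ((hmax.unaffected_pred (by omega)).reach
      ((hW.mem_bundleOf_iff hC (by omega)).mpr (by omega)) he)
  · exact hr ((hmax.unaffected_succ (by omega)).reach
      ((hW.mem_bundleOf_iff hC (by omega)).mpr (by omega)) he)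

lemma MaxAffStretch.exists_innerEdges (hmax : MaxAffStretch ends s p C st q Z i j)
    (hW : IsBundleSeq ends s p C q st) (hC : CanonSeq ends s t p C) (hil : i ≤ l) (hlj : l ≤ j)
    (hm : m ≤ q + 1) (hlm : m ≤ l + 1 ∧ l ≤ m + 1)
    (hU : ConnIn ends (bundleOf ends s p C st l ∪ bundleOf ends s p C st m)) :
    ∃ e ∈ innerEdges ends Z (stretchSet ends s p C st i j), ∃ x y, ends e = s(x, y) ∧
      (bundleIdx ends s p C st x = l ∨
        (bundleIdx ends s p C st x = l ∨ bundleIdx ends s p C st x = m) ∧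
        (bundleIdx ends s p C st y = l ∨ bundleIdx ends s p C st y = m)) := by
  have hjq := hmax.2.1
  by_contra hne
  refine hmax.2.2.1 l hil hlj
    (unaffected_of_connIn Set.subset_union_left hU fun e he x y hxy hloc => ?_)
  by_contra hr
  have hyx : ends e = s(y, x) := hxy.trans Sym2.eq_swap
  simp only [Set.mem_union, hW.mem_bundleOf_iff hC hm, hW.mem_bundleOf_iff hC (hlj.trans hjq)]
    at hloc
  have := hW.bundleIdx_le_succ_of_adj hC hxy
  have := hW.bundleIdx_le_succ_of_adj hC hyx
  have hx := hmax.bundleIdx_mem_of_not_reach hW hC hxy hr (by omega) (by omega)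
  have hy := hmax.bundleIdx_mem_of_not_reach hW hC hyx (fun h => hr h.symm) (by omega) (by omega)
  refine hne ⟨e, ⟨he, fun v hv => ?_⟩, x, y, hxy, hloc⟩
  rw [hxy, Sym2.mem_iff] at hv
  rcases hv with rfl | rfl
  · exact (hW.mem_stretchSet_iff hC hjq).mpr hx
  · exact (hW.mem_stretchSet_iff hC hjq).mpr hy

/-- Each affected bundle `W_l` is charged to an edge of `Z` inside the stretch that touches
`W_l` or lies in the neighbouring bundle on the side where the stretch ends in an unaffected
bundle; every edge is charged at most twice. -/
lemma MaxAffStretch.sub_add_one_le_two_mul_ncard [Finite E]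
    (hmax : MaxAffStretch ends s p C st q Z i j) (hW : IsBundleSeq ends s p C q st)
    (hC : CanonSeq ends s t p C) (hconn : ∀ u v : V, Reach ends (∅ : Set E) u v)
    (hdir : j ≤ q ∨ i ≠ 0) :
    j - i + 1 ≤ 2 * (innerEdges ends Z (stretchSet ends s p C st i j)).ncard := by
  have hij := hmax.1
  have hjq := hmax.2.1
  rw [show j - i + 1 = j + 1 - i by omega]
  rcases hdir with hj | hi
  · refine sub_le_two_mul_ncard (fun e => ((ends e).map (bundleIdx ends s p C st)).sup - 1)
      fun l hil hlj => ?_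
    obtain ⟨e, he, x, y, hxy, hloc⟩ := hmax.exists_innerEdges hW hC hil hlj (m := l + 1)
      (by omega) (by omega) (hW.connIn_bundleOf_union_succ hC hconn (by omega))
    have := hW.bundleIdx_le_succ_of_adj hC hxy
    have := hW.bundleIdx_le_succ_of_adj hC (hxy.trans Sym2.eq_swap)
    refine ⟨e, he, ?_⟩
    simp only [hxy, Sym2.map_mk, Sym2.sup_mk]
    omega
  · refine sub_le_two_mul_ncard (fun e => ((ends e).map (bundleIdx ends s p C st)).inf)
      fun l hil hlj => ?_
    have hU := hW.connIn_bundleOf_union_succ hC hconn (m := l - 1) (by omega)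
    rw [Nat.sub_add_cancel (by omega), Set.union_comm] at hU
    obtain ⟨e, he, x, y, hxy, hloc⟩ := hmax.exists_innerEdges hW hC hil hlj (m := l - 1)
      (by omega) (by omega) hU
    have := hW.bundleIdx_le_succ_of_adj hC hxy
    have := hW.bundleIdx_le_succ_of_adj hC (hxy.trans Sym2.eq_swap)
    refine ⟨e, he, ?_⟩
    simp only [hxy, Sym2.map_mk, Sym2.inf_mk]
    omega

end Stretches

theorem nonstrong_stretches_structure_general {V E : Type} [Fintype E]
    (ends : E → Sym2 V)
    (hconn : ∀ u v : V, Reach ends (∅ : Set E) u v)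
    (s t : V)
    (p : ℕ) (C : ℕ → Set E) (hC : CanonSeq ends s t p C)
    (q : ℕ) (st : ℕ → ℕ) (hW : IsBundleSeq ends s p C q st)
    (Z : Set E)
    (a b : ℕ) (hab : StronglyAffStretch ends s t p C st q Z a b) :
    (∀ i : ℕ, i < a → Unaffected ends Z (bundleOf ends s p C st i) →
        bundleOf ends s p C st i ⊆ RS ends Z {s}) ∧
    (∀ i : ℕ, b < i → i ≤ q + 1 → Unaffected ends Z (bundleOf ends s p C st i) →
        bundleOf ends s p C st i ⊆ RS ends Z {t}) ∧
    (∀ i j : ℕ, MaxAffStretch ends s p C st q Z i j → j < a →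
        leftInterface ends s p C st i ⊆ RS ends Z {s} ∧
        rightInterface ends s t p C st q j ⊆ RS ends Z {s} ∧
        j - i + 1 ≤
          2 * {e | e ∈ Z ∧ ∀ v ∈ ends e, v ∈ stretchSet ends s p C st i j}.ncard) ∧
    (∀ i j : ℕ, MaxAffStretch ends s p C st q Z i j → b < i →
        leftInterface ends s p C st i ⊆ RS ends Z {t} ∧
        rightInterface ends s t p C st q j ⊆ RS ends Z {t} ∧
        j - i + 1 ≤
          2 * {e | e ∈ Z ∧ ∀ v ∈ ends e, v ∈ stretchSet ends s p C st i j}.ncard) := by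
  obtain ⟨⟨hab, hbq, -⟩, ⟨xs, hxs, hsxs⟩, ⟨xt, hxt, htxt⟩⟩ := hab
  rw [hW.mem_stretchSet_iff hC hbq] at hxs hxt
  rw [mem_RS_singleton] at hsxs htxt
  have h0 := hW.bundleIdx_self
  have hq := hW.bundleIdx_target hC
  have hS : ∀ m ≤ a, Unaffected ends Z (bundleOf ends s p C st m) →
      closedNbhd ends (bundleOf ends s p C st m) ⊆ RS ends Z {s} := fun m hm =>
    hW.closedNbhd_subset_RS hC hsxs (by omega) (.inl (by omega))
  have hT : ∀ m, b ≤ m → m ≤ q + 1 → Unaffected ends Z (bundleOf ends s p C st m) →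
      closedNbhd ends (bundleOf ends s p C st m) ⊆ RS ends Z {t} := fun m hm hmq =>
    hW.closedNbhd_subset_RS hC htxt hmq (.inr (by omega))
  refine ⟨fun i hi hU => subset_closedNbhd.trans (hS i hi.le hU),
    fun i hi hiq hU => subset_closedNbhd.trans (hT i hi.le hiq hU),
    fun i j hij hja => ⟨?_, ?_, ?_⟩, fun i j hij hbi => ⟨?_, ?_, ?_⟩⟩
  all_goals have hij' : i ≤ j ∧ j ≤ q + 1 := ⟨hij.1, hij.2.1⟩
  · exact hW.leftInterface_subset hC (by omega) (fun _ => mem_RS_singleton.mpr .refl)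
      fun hi => hS _ (by omega) (hij.unaffected_pred hi)
  · exact hW.rightInterface_subset hC (by omega) (fun _ => by omega)
      fun hj => hS _ (by omega) (hij.unaffected_succ hj)
  · exact hij.sub_add_one_le_two_mul_ncard hW hC hconn (.inl (by omega))
  · exact hW.leftInterface_subset hC (by omega) (fun _ => by omega)
      fun hi => hT _ (by omega) (by omega) (hij.unaffected_pred hi)
  · exact hW.rightInterface_subset hC (by omega) (fun _ => mem_RS_singleton.mpr .refl)
      fun hj => hT _ (by omega) (by omega) (hij.unaffected_succ hj)
  · exact hij.sub_add_one_le_two_mul_ncard hW hC hconn (.inr (by omega))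

/-- Let `Z` be a special `(s,t)`-cut with strongly affected stretch
`W_{a,b}`.  (1) Unaffected bundles before `W_a` lie in `R_s(Z)`; (2) unaffected bundles
after `W_b` lie in `R_t(Z)`; (3) a maximal affected stretch `W_{i,j}` with `j < a` has
both interfaces in `R_s(Z)` and `j - i + 1 ≤ 2·|Z ∩ W_{i,j}|`; (4) symmetrically with
`R_t(Z)` for `i > b`. -/
theorem nonstrong_stretches_structure {V E : Type} [Fintype V] [Fintype E]
    (ends : E → Sym2 V) (hloop : ∀ e, ¬ (ends e).IsDiag)
    (hconn : ∀ u v : V, Reach ends (∅ : Set E) u v)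
    (s t : V) (hst : s ≠ t)
    (p : ℕ) (C : ℕ → Set E) (hC : CanonSeq ends s t p C)
    (q : ℕ) (st : ℕ → ℕ) (hW : IsBundleSeq ends s p C q st)
    (Z : Set E) (hZ : IsSpecial ends s t Z)
    (a b : ℕ) (hab : StronglyAffStretch ends s t p C st q Z a b) :
    (∀ i : ℕ, i < a → Unaffected ends Z (bundleOf ends s p C st i) →
        bundleOf ends s p C st i ⊆ RS ends Z {s}) ∧
    (∀ i : ℕ, b < i → i ≤ q + 1 → Unaffected ends Z (bundleOf ends s p C st i) →
        bundleOf ends s p C st i ⊆ RS ends Z {t}) ∧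
    (∀ i j : ℕ, MaxAffStretch ends s p C st q Z i j → j < a →
        leftInterface ends s p C st i ⊆ RS ends Z {s} ∧
        rightInterface ends s t p C st q j ⊆ RS ends Z {s} ∧
        j - i + 1 ≤
          2 * {e | e ∈ Z ∧ ∀ v ∈ ends e, v ∈ stretchSet ends s p C st i j}.ncard) ∧
    (∀ i j : ℕ, MaxAffStretch ends s p C st q Z i j → b < i →
        leftInterface ends s p C st i ⊆ RS ends Z {t} ∧
        rightInterface ends s t p C st q j ⊆ RS ends Z {t} ∧
        j - i + 1 ≤
          2 * {e | e ∈ Z ∧ ∀ v ∈ ends e, v ∈ stretchSet ends s p C st i j}.ncard) :=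
  nonstrong_stretches_structure_general ends hconn s t p C hC q st hW Z a b hab

end FlowAug
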